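/- Assume K_M is positive semidefinite. Let F : [0,T] → ℝ^{n×n} be the unique solution of F'(t) = L[F(t)] with symmetric initial value F(0), and let F_H : [0,T] → ℝ^{n×n} be a differentiable symmetric-matrix-valued function with F_H(0) = F(0) and such that L[F_H(t)] − F_H'(t) is positive semidefinite for every t ∈ [0,T]. Then F(t) − F_H(t) is positive semidefinite for every t ∈ [0,T]. -/

import Mathlib

open Matrix MeasureTheory Filter
open scoped Kronecker Topology

/-- Column-stacking vectorization of a matrix: `vecM X (j, i) = X i j`. -/
def vecM {a b : Type*} (X : Matrix a b ℝ) : b × a → ℝ := fun p => X p.2 p.1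

/-- Inverse of column-stacking vectorization. -/
def unvecM {a b : Type*} (v : b × a → ℝ) : Matrix a b ℝ := Matrix.of fun i j => v (j, i)

/-- (Mixed) Lyapunov-type operator `X ↦ A₁ X + X A₂ᵀ + ∑ᵢⱼ kᵢⱼ • N₁ᵢ X N₂ⱼᵀ`. -/
def lyapM {a b : Type*} [Fintype a] [Fintype b] {q : ℕ}
    (A₁ : Matrix a a ℝ) (A₂ : Matrix b b ℝ)
    (N₁ : Fin q → Matrix a a ℝ) (N₂ : Fin q → Matrix b b ℝ)
    (K : Matrix (Fin q) (Fin q) ℝ) (X : Matrix a b ℝ) : Matrix a b ℝ :=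
  A₁ * X + X * A₂ᵀ + ∑ i, ∑ j, K i j • (N₁ i * X * (N₂ j)ᵀ)

/-- Frobenius adjoint of `lyapM`: `X ↦ A₁ᵀ X + X A₂ + ∑ᵢⱼ kᵢⱼ • N₁ᵢᵀ X N₂ⱼ`. -/
def lyapAdjM {a b : Type*} [Fintype a] [Fintype b] {q : ℕ}
    (A₁ : Matrix a a ℝ) (A₂ : Matrix b b ℝ)
    (N₁ : Fin q → Matrix a a ℝ) (N₂ : Fin q → Matrix b b ℝ)
    (K : Matrix (Fin q) (Fin q) ℝ) (X : Matrix a b ℝ) : Matrix a b ℝ :=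
  A₁ᵀ * X + X * A₂ + ∑ i, ∑ j, K i j • ((N₁ i)ᵀ * X * N₂ j)

/-- Kronecker matrix `𝒦 = I ⊗ A₁ + A₂ ⊗ I + ∑ᵢⱼ kᵢⱼ • (N₂ᵢ ⊗ N₁ⱼ)` associated to `lyapM`. -/
noncomputable def kronM {a b : Type*} [Fintype a] [Fintype b] [DecidableEq a] [DecidableEq b] {q : ℕ}
    (A₁ : Matrix a a ℝ) (A₂ : Matrix b b ℝ)
    (N₁ : Fin q → Matrix a a ℝ) (N₂ : Fin q → Matrix b b ℝ)
    (K : Matrix (Fin q) (Fin q) ℝ) : Matrix (b × a) (b × a) ℝ :=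
  (1 : Matrix b b ℝ) ⊗ₖ A₁ + A₂ ⊗ₖ (1 : Matrix a a ℝ) + ∑ i, ∑ j, K i j • (N₂ i ⊗ₖ N₁ j)

/-- `F` solves the matrix ODE `F' = L (F t)` at every `t ∈ [0,T]` (entrywise). -/
def solvesODE {a b : Type*} (L : Matrix a b ℝ → Matrix a b ℝ)
    (F : ℝ → Matrix a b ℝ) (T : ℝ) : Prop :=
  ∀ t ∈ Set.Icc (0:ℝ) T, ∀ i j, HasDerivAt (fun s => F s i j) (L (F t) i j) t

/-- Entrywise integral `∫₀ᵀ F(t) dt`. -/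
noncomputable def intM {a b : Type*} (F : ℝ → Matrix a b ℝ) (T : ℝ) : Matrix a b ℝ :=
  Matrix.of fun i j => ∫ t in (0:ℝ)..T, F t i j

/-- Explicit solution of a vectorized linear matrix ODE via the matrix exponential. -/
noncomputable def expSolM {a b : Type*} [Fintype a] [Fintype b] [DecidableEq a] [DecidableEq b]
    (Kmat : Matrix (b × a) (b × a) ℝ) (F₀ : Matrix a b ℝ) (t : ℝ) : Matrix a b ℝ :=
  unvecM (NormedSpace.exp (t • Kmat) *ᵥ vecM F₀)

/-!
Put `G = F - F_H`, so that `G 0 = 0` and `G' - 𝓛 G` is positive semidefinite. Because `K_M ⪰ 0`,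
`𝓛` is cross-positive: `xᵀ 𝓛(H) x ≥ 0` whenever `H ⪰ 0` and `H x = 0`. For `ε > 0` and `c` large,
`H t = G t + ε e^{ct} I` stays positive definite: at a first time `t₀` with `xᵀ H(t₀) x = 0` for
some `x ≠ 0`, the matrix `H t₀ ⪰ 0` kills `x`, and cross-positivity forces
`d/dt xᵀ H x > 0` at `t₀`, which is impossible at a first zero. Now let `ε → 0`. The symmetry of
`F` used on the way comes from uniqueness for the ODE, since `𝓛` commutes with transposition.
-/

open Set

section
variable {n : Type*} [Fintype n]

lemma Matrix.PosSemidef.sum_mul_dotProduct_mulVec_nonneg {ι : Type*} [Fintype ι]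
    {K : Matrix ι ι ℝ} (hK : K.PosSemidef) {H : Matrix n n ℝ} (hH : H.PosSemidef)
    (u : ι → n → ℝ) : 0 ≤ ∑ i, ∑ j, K i j * (u i ⬝ᵥ (H *ᵥ u j)) := by
  have hGram : (of u * H * (of u)ᵀ).PosSemidef := by
    simpa using hH.mul_mul_conjTranspose_same (of u)
  have hentry : ∀ i j, (of u * H * (of u)ᵀ) i j = u i ⬝ᵥ (H *ᵥ u j) := fun i j => by
    rw [dotProduct_mulVec]; rfl
  simpa [dotProduct, mulVec, hentry] using
    (hK.hadamard hGram).dotProduct_mulVec_nonneg (fun _ => 1)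

lemma abs_mul_le_dotProduct_self (x : n → ℝ) (i j : n) : |x i * x j| ≤ x ⬝ᵥ x := by
  have hsq : ∀ k, |x k| * |x k| ≤ x ⬝ᵥ x := fun k => by
    rw [abs_mul_abs_self]
    exact Finset.single_le_sum (f := fun l => x l * x l) (fun l _ => mul_self_nonneg _)
      (Finset.mem_univ k)
  rw [abs_mul]
  nlinarith [hsq i, hsq j, sq_nonneg (|x i| - |x j|)]

lemma Matrix.dotProduct_mulVec_le_mul_dotProduct_self (M : Matrix n n ℝ) (x : n → ℝ) :
    x ⬝ᵥ (M *ᵥ x) ≤ (∑ i, ∑ j, |M i j|) * (x ⬝ᵥ x) := by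
  calc x ⬝ᵥ (M *ᵥ x) = ∑ i, ∑ j, M i j * (x i * x j) := by
        simp only [dotProduct, mulVec, Finset.mul_sum]
        exact Finset.sum_congr rfl fun i _ => Finset.sum_congr rfl fun j _ => by ring
    _ ≤ ∑ i, ∑ j, |M i j| * (x ⬝ᵥ x) :=
        Finset.sum_le_sum fun i _ => Finset.sum_le_sum fun j _ =>
          (le_abs_self _).trans (abs_mul _ _).le |>.trans
            (mul_le_mul_of_nonneg_left (abs_mul_le_dotProduct_self x i j) (abs_nonneg _))
    _ = (∑ i, ∑ j, |M i j|) * (x ⬝ᵥ x) := by simp only [Finset.sum_mul]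

lemma hasDerivAt_dotProduct_mulVec {M : ℝ → Matrix n n ℝ} {M' : Matrix n n ℝ} {t : ℝ}
    (hM : ∀ i j, HasDerivAt (fun s => M s i j) (M' i j) t) (x : n → ℝ) :
    HasDerivAt (fun s => x ⬝ᵥ (M s *ᵥ x)) (x ⬝ᵥ (M' *ᵥ x)) t := by
  simp only [dotProduct, mulVec]
  exact HasDerivAt.fun_sum fun i _ =>
    (HasDerivAt.fun_sum fun j _ => (hM i j).mul_const (x j)).const_mul (x i)

lemma HasDerivAt.nonpos_of_eventually_le_left {f : ℝ → ℝ} {f' t : ℝ} (hf : HasDerivAt f f' t)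
    (h : ∀ᶠ s in 𝓝[<] t, f t ≤ f s) : f' ≤ 0 := by
  refine le_of_tendsto (hasDerivAt_iff_tendsto_slope_left_right.mp hf).1 ?_
  filter_upwards [h, self_mem_nhdsWithin] with s hs hst
  rw [slope_def_field]
  exact div_nonpos_of_nonneg_of_nonpos (sub_nonneg.mpr hs) (sub_nonpos.mpr (le_of_lt hst))

lemma IsCompact.exists_first_nonpos {X : Type*} [TopologicalSpace X] [T2Space X] {S : Set X}
    (hS : IsCompact S) {T : ℝ} {φ : X → ℝ → ℝ}
    (hφ : ContinuousOn (Function.uncurry φ) (S ×ˢ Icc 0 T))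
    (h : ∃ t ∈ Icc 0 T, ∃ x ∈ S, φ x t ≤ 0) :
    ∃ t₀ ∈ Icc 0 T, ∃ x₀ ∈ S, φ x₀ t₀ ≤ 0 ∧ ∀ s ∈ Ico 0 t₀, ∀ x ∈ S, 0 < φ x s := by
  set bad := S ×ˢ Icc 0 T ∩ Function.uncurry φ ⁻¹' Iic 0
  have hbad : IsCompact bad := (hS.prod isCompact_Icc).of_isClosed_subset
    (hφ.preimage_isClosed_of_isClosed (hS.isClosed.prod isClosed_Icc) isClosed_Iic)
    inter_subset_left
  obtain ⟨t, ht, x, hx, hxt⟩ := h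
  obtain ⟨⟨x₀, t₀⟩, ⟨⟨hx₀, ht₀⟩, hφ₀⟩, hmin⟩ :=
    hbad.exists_isMinOn ⟨(x, t), ⟨hx, ht⟩, hxt⟩ continuous_snd.continuousOn
  refine ⟨t₀, ht₀, x₀, hx₀, hφ₀, fun s hs y hy => lt_of_not_ge fun hys => ?_⟩
  exact (hmin (show (y, s) ∈ bad from ⟨⟨hy, hs.1, hs.2.le.trans ht₀.2⟩, hys⟩)).not_gt hs.2

lemma Matrix.posSemidef_of_forall_mem_sphere {M : Matrix n n ℝ} (hM : M.IsSymm)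
    (h : ∀ x ∈ Metric.sphere (0 : n → ℝ) 1, 0 ≤ x ⬝ᵥ (M *ᵥ x)) : M.PosSemidef := by
  refine .of_dotProduct_mulVec_nonneg (isHermitian_iff_isSymm.mpr hM) fun x => ?_
  rw [star_trivial]
  rcases eq_or_ne x 0 with rfl | hx
  · simp
  have hunit := h (‖x‖⁻¹ • x) (by simpa using norm_smul_inv_norm (𝕜 := ℝ) hx)
  rw [Matrix.mulVec_smul, dotProduct_smul, smul_dotProduct, smul_eq_mul, smul_eq_mul] at hunit
  have : 0 < ‖x‖⁻¹ := inv_pos.mpr (norm_pos_iff.mpr hx)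
  exact nonneg_of_mul_nonneg_right (nonneg_of_mul_nonneg_right hunit this) this

end

section
variable {n : Type*} [Fintype n]

attribute [local instance] Matrix.normedAddCommGroup Matrix.normedSpace

lemma hasDerivAt_matrix_of_entries {F : ℝ → Matrix n n ℝ} {F' : Matrix n n ℝ} {t : ℝ}
    (h : ∀ i j, HasDerivAt (fun s => F s i j) (F' i j) t) : HasDerivAt F F' t :=
  hasDerivAt_pi.2 fun i => hasDerivAt_pi.2 fun j => h i j

theorem isSymm_of_solvesODE {L : Matrix n n ℝ →ₗ[ℝ] Matrix n n ℝ} (hL : ∀ X, (L X)ᵀ = L Xᵀ)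
    {F : ℝ → Matrix n n ℝ} {T : ℝ} (hF : solvesODE L F T) (hF0 : (F 0).IsSymm) :
    ∀ t ∈ Icc 0 T, (F t).IsSymm := by
  have hFd : ∀ t ∈ Icc 0 T, HasDerivAt F (L (F t)) t := fun t ht =>
    hasDerivAt_matrix_of_entries (hF t ht)
  have hFTd : ∀ t ∈ Icc 0 T, HasDerivAt (fun s => (F s)ᵀ) (L (F t)ᵀ) t := fun t ht =>
    hasDerivAt_matrix_of_entries fun i j => by simpa [← hL] using hF t ht j i
  obtain ⟨K, hK⟩ := L.toAffineMap.lipschitzWith_of_finiteDimensional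
  have := ODE_solution_unique (v := fun _ => L) (fun _ => hK)
    (fun t ht => (hFd t ht).continuousAt.continuousWithinAt)
    (fun t ht => (hFd t (Ico_subset_Icc_self ht)).hasDerivWithinAt)
    (fun t ht => (hFTd t ht).continuousAt.continuousWithinAt)
    (fun t ht => (hFTd t (Ico_subset_Icc_self ht)).hasDerivWithinAt) hF0.symm
  exact fun t ht => (this ht).symm

end

section
variable {n : Type*} [Fintype n]

/-- Cross-positivity on the positive semidefinite cone, which for linear `L` is equivalent to
resolvent positivity (Schneider–Vidyasagar). -/
def CrossPositive (L : Matrix n n ℝ →ₗ[ℝ] Matrix n n ℝ) : Prop :=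
  ∀ (H : Matrix n n ℝ) (x : n → ℝ), H.PosSemidef → H *ᵥ x = 0 → 0 ≤ x ⬝ᵥ (L H *ᵥ x)

variable [DecidableEq n] {L : Matrix n n ℝ →ₗ[ℝ] Matrix n n ℝ}

lemma CrossPositive.lt_dotProduct_mulVec_add (hL : CrossPositive L) {G G' : Matrix n n ℝ}
    (hG' : (G' - L G).PosSemidef) {δ c : ℝ} (hδ : 0 < δ) {x : n → ℝ}
    (hc : x ⬝ᵥ (L 1 *ᵥ x) < c * (x ⬝ᵥ x)) (hH : (G + δ • 1).PosSemidef)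
    (hHx : (G + δ • 1) *ᵥ x = 0) : 0 < x ⬝ᵥ (G' *ᵥ x) + δ * c * (x ⬝ᵥ x) := by
  have hcontact := hL _ x hH hHx
  have hsuper := hG'.dotProduct_mulVec_nonneg x
  simp only [map_add, map_smul, Matrix.add_mulVec, Matrix.sub_mulVec, Matrix.smul_mulVec,
    dotProduct_add, dotProduct_sub, dotProduct_smul, smul_eq_mul, star_trivial] at hcontact hsuper
  nlinarith [mul_lt_mul_of_pos_left hc hδ]

lemma hasDerivAt_dotProduct_mulVec_add_exp_smul_one {G : ℝ → Matrix n n ℝ} {G' : Matrix n n ℝ}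
    {t : ℝ} (hG : ∀ i j, HasDerivAt (fun s => G s i j) (G' i j) t) (ε c : ℝ) (x : n → ℝ) :
    HasDerivAt (fun s => x ⬝ᵥ ((G s + (ε * Real.exp (c * s)) • 1) *ᵥ x))
      (x ⬝ᵥ (G' *ᵥ x) + ε * Real.exp (c * t) * c * (x ⬝ᵥ x)) t := by
  have hexp := (((hasDerivAt_id t).const_mul c).exp.const_mul ε).congr_deriv
    (show ε * (Real.exp (c * id t) * (c * 1)) = ε * Real.exp (c * t) * c by simp [mul_assoc])
  refine (hasDerivAt_dotProduct_mulVec (M' := G' + (ε * Real.exp (c * t) * c) • 1)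
    (fun i j => (hG i j).add (hexp.mul_const ((1 : Matrix n n ℝ) i j))) x).congr_deriv ?_
  simp only [Matrix.add_mulVec, Matrix.smul_mulVec, Matrix.one_mulVec, dotProduct_add,
    dotProduct_smul, smul_eq_mul, mul_assoc]

lemma CrossPositive.dotProduct_mulVec_add_exp_smul_one_pos (hL : CrossPositive L) {T c ε : ℝ}
    {G G' : ℝ → Matrix n n ℝ} (hG0 : (G 0).PosSemidef) (hG : ∀ t ∈ Icc 0 T, (G t).IsSymm)
    (hG' : ∀ t ∈ Icc 0 T, ∀ i j, HasDerivAt (fun s => G s i j) (G' t i j) t)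
    (hineq : ∀ t ∈ Icc 0 T, (G' t - L (G t)).PosSemidef)
    (hc : ∀ x ≠ 0, x ⬝ᵥ (L 1 *ᵥ x) < c * (x ⬝ᵥ x)) (hε : 0 < ε) :
    ∀ t ∈ Icc 0 T, ∀ x ∈ Metric.sphere (0 : n → ℝ) 1,
      0 < x ⬝ᵥ ((G t + (ε * Real.exp (c * t)) • 1) *ᵥ x) := by
  set H : ℝ → Matrix n n ℝ := fun t => G t + (ε * Real.exp (c * t)) • 1
  have hH' : ∀ t ∈ Icc 0 T, ∀ x, HasDerivAt (fun s => x ⬝ᵥ (H s *ᵥ x))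
      (x ⬝ᵥ (G' t *ᵥ x) + ε * Real.exp (c * t) * c * (x ⬝ᵥ x)) t := fun t ht =>
    hasDerivAt_dotProduct_mulVec_add_exp_smul_one (hG' t ht) ε c
  have hHc : ContinuousOn H (Icc 0 T) := by
    refine ContinuousOn.add ?_ (Continuous.continuousOn (by fun_prop))
    exact continuousOn_pi.2 fun i => continuousOn_pi.2 fun j t ht =>
      (hG' t ht i j).continuousAt.continuousWithinAt
  have hφ : ContinuousOn (Function.uncurry fun x t => x ⬝ᵥ (H t *ᵥ x))
      (Metric.sphere 0 1 ×ˢ Icc 0 T) :=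
    (continuous_fst.dotProduct (continuous_snd.matrix_mulVec continuous_fst)).comp_continuousOn
      (continuousOn_fst.prodMk (hHc.comp continuousOn_snd fun p hp => hp.2))
  by_contra! hneg
  obtain ⟨t₀, ht₀, x₀, hx₀, hφ₀, hpos⟩ :=
    (isCompact_sphere 0 1).exists_first_nonpos hφ hneg
  have hx₀ne : x₀ ≠ 0 := by rintro rfl; simp at hx₀
  have ht₀pos : 0 < t₀ := by
    refine ht₀.1.lt_of_ne fun h => hφ₀.not_gt ?_
    have hH0 : (H 0).PosDef :=
      Matrix.PosDef.posSemidef_add hG0 (Matrix.PosDef.one.smul (by positivity))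
    simpa [← h, star_trivial] using hH0.dotProduct_mulVec_pos hx₀ne
  have hleft : ∀ᶠ s in 𝓝[<] t₀, ∀ x ∈ Metric.sphere (0 : n → ℝ) 1, 0 < x ⬝ᵥ (H s *ᵥ x) := by
    filter_upwards [Ioo_mem_nhdsLT ht₀pos] with s hs using hpos s ⟨hs.1.le, hs.2⟩
  have hHt₀ : (H t₀).PosSemidef := Matrix.posSemidef_of_forall_mem_sphere
    ((hG t₀ ht₀).add (Matrix.isSymm_one.smul _)) fun x hx =>
      ge_of_tendsto (hH' t₀ ht₀ x).continuousAt.continuousWithinAt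
        (hleft.mono fun s hs => (hs x hx).le)
  have hHx₀ : H t₀ *ᵥ x₀ = 0 := (hHt₀.dotProduct_mulVec_zero_iff x₀).mp <| by
    rw [star_trivial]
    exact le_antisymm hφ₀ (by simpa [star_trivial] using hHt₀.dotProduct_mulVec_nonneg x₀)
  have hderiv_nonpos := (hH' t₀ ht₀ x₀).nonpos_of_eventually_le_left
    (hleft.mono fun s hs => hφ₀.trans (hs x₀ hx₀).le)
  have hderiv_pos := hL.lt_dotProduct_mulVec_add (hineq t₀ ht₀)
    (mul_pos hε (Real.exp_pos (c * t₀))) (hc x₀ hx₀ne) hHt₀ hHx₀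
  linarith

theorem CrossPositive.posSemidef_of_hasDerivAt (hL : CrossPositive L) {T : ℝ}
    {G G' : ℝ → Matrix n n ℝ} (hG0 : (G 0).PosSemidef) (hG : ∀ t ∈ Icc 0 T, (G t).IsSymm)
    (hG' : ∀ t ∈ Icc 0 T, ∀ i j, HasDerivAt (fun s => G s i j) (G' t i j) t)
    (hineq : ∀ t ∈ Icc 0 T, (G' t - L (G t)).PosSemidef) :
    ∀ t ∈ Icc 0 T, (G t).PosSemidef := by
  set c := ∑ i, ∑ j, |L 1 i j| + 1
  have hxx : ∀ x : n → ℝ, x ≠ 0 → 0 < x ⬝ᵥ x := fun x hx => by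
    simpa [star_trivial] using dotProduct_self_star_pos_iff.mpr hx
  have hc : ∀ x ≠ 0, x ⬝ᵥ (L 1 *ᵥ x) < c * (x ⬝ᵥ x) := fun x hx => by
    linarith [(L 1).dotProduct_mulVec_le_mul_dotProduct_self x, hxx x hx]
  intro t ht
  refine Matrix.posSemidef_of_forall_mem_sphere (hG t ht) fun x hx => ?_
  refine le_of_forall_pos_lt_add fun δ hδ => ?_
  have hk : 0 < Real.exp (c * t) * (x ⬝ᵥ x) :=
    mul_pos (Real.exp_pos _) (hxx x (by rintro rfl; simp at hx))
  have := hL.dotProduct_mulVec_add_exp_smul_one_pos hG0 hG hG' hineq hc (div_pos hδ hk) t ht x hx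
  simp only [Matrix.add_mulVec, Matrix.smul_mulVec, Matrix.one_mulVec, dotProduct_add,
    dotProduct_smul, smul_eq_mul] at this
  have hδ' : δ / (Real.exp (c * t) * (x ⬝ᵥ x)) * Real.exp (c * t) * (x ⬝ᵥ x) = δ := by
    rw [mul_assoc, div_mul_cancel₀ _ hk.ne']
  linarith

end

section
variable {a b : Type*} [Fintype a] [Fintype b] {q : ℕ}

def lyapMₗ (A₁ : Matrix a a ℝ) (A₂ : Matrix b b ℝ) (N₁ : Fin q → Matrix a a ℝ)
    (N₂ : Fin q → Matrix b b ℝ) (K : Matrix (Fin q) (Fin q) ℝ) :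
    Matrix a b ℝ →ₗ[ℝ] Matrix a b ℝ where
  toFun := lyapM A₁ A₂ N₁ N₂ K
  map_add' X Y := by
    simp only [lyapM, Matrix.mul_add, Matrix.add_mul, smul_add, Finset.sum_add_distrib]
    abel
  map_smul' r X := by
    simp only [lyapM, Matrix.mul_smul, Matrix.smul_mul, smul_add, Finset.smul_sum, smul_comm r,
      RingHom.id_apply]

@[simp]
lemma lyapMₗ_apply (A₁ : Matrix a a ℝ) (A₂ : Matrix b b ℝ) (N₁ : Fin q → Matrix a a ℝ)
    (N₂ : Fin q → Matrix b b ℝ) (K : Matrix (Fin q) (Fin q) ℝ) (X : Matrix a b ℝ) :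
    lyapMₗ A₁ A₂ N₁ N₂ K X = lyapM A₁ A₂ N₁ N₂ K X :=
  rfl

lemma transpose_lyapM (A₁ : Matrix a a ℝ) (A₂ : Matrix b b ℝ) (N₁ : Fin q → Matrix a a ℝ)
    (N₂ : Fin q → Matrix b b ℝ) (K : Matrix (Fin q) (Fin q) ℝ) (X : Matrix a b ℝ) :
    (lyapM A₁ A₂ N₁ N₂ K X)ᵀ = lyapM A₂ A₁ N₂ N₁ Kᵀ Xᵀ := by
  simp only [lyapM, Matrix.transpose_add, Matrix.transpose_mul, Matrix.transpose_smul,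
    Matrix.transpose_sum, Matrix.transpose_transpose, Matrix.transpose_apply, Matrix.mul_assoc]
  rw [Finset.sum_comm, add_comm (Xᵀ * A₁ᵀ)]

end

lemma crossPositive_lyapMₗ {n : Type*} [Fintype n] {q : ℕ} (A₁ A₂ : Matrix n n ℝ)
    (N : Fin q → Matrix n n ℝ) {K : Matrix (Fin q) (Fin q) ℝ} (hK : K.PosSemidef) :
    CrossPositive (lyapMₗ A₁ A₂ N N K) := by
  intro H x hH hHx
  have hxH : x ᵥ* H = 0 := by
    rw [← Matrix.mulVec_transpose, (Matrix.isHermitian_iff_isSymm.mp hH.1).eq, hHx]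
  have hN : ∀ i j, x ⬝ᵥ ((N i * H * (N j)ᵀ) *ᵥ x) = (N i)ᵀ *ᵥ x ⬝ᵥ (H *ᵥ ((N j)ᵀ *ᵥ x)) :=
    fun i j => by
      simp only [← Matrix.mulVec_mulVec, Matrix.dotProduct_mulVec, Matrix.mulVec_transpose]
  simp only [lyapMₗ_apply, lyapM, Matrix.add_mulVec, Matrix.sum_mulVec, Matrix.smul_mulVec,
    dotProduct_add, dotProduct_sum, dotProduct_smul, smul_eq_mul, hN]
  rw [← Matrix.mulVec_mulVec, hHx, Matrix.mulVec_zero, dotProduct_zero, ← Matrix.mulVec_mulVec,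
    Matrix.dotProduct_mulVec, hxH, zero_dotProduct, zero_add, zero_add]
  exact hK.sum_mul_dotProduct_mulVec_nonneg hH _

theorem stmt_4_general {n q : ℕ} (T : ℝ)
    (A : Matrix (Fin n) (Fin n) ℝ) (N : Fin q → Matrix (Fin n) (Fin n) ℝ)
    (K : Matrix (Fin q) (Fin q) ℝ) (hK : K.PosSemidef)
    (F FH FH' : ℝ → Matrix (Fin n) (Fin n) ℝ)
    (hF : solvesODE (lyapM A A N N K) F T) (hF0symm : (F 0).IsSymm)
    (hFH0 : FH 0 = F 0)
    (hFHsymm : ∀ t ∈ Set.Icc (0:ℝ) T, (FH t).IsSymm)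
    (hFHderiv : ∀ t ∈ Set.Icc (0:ℝ) T, ∀ i j,
      HasDerivAt (fun s => FH s i j) (FH' t i j) t)
    (hineq : ∀ t ∈ Set.Icc (0:ℝ) T, (lyapM A A N N K (FH t) - FH' t).PosSemidef) :
    ∀ t ∈ Set.Icc (0:ℝ) T, (F t - FH t).PosSemidef := by
  set L := lyapMₗ A A N N K
  have hKsymm : Kᵀ = K := isHermitian_iff_isSymm.mp hK.1
  have hFsymm : ∀ t ∈ Icc 0 T, (F t).IsSymm :=
    isSymm_of_solvesODE (L := L) (fun X => by simp only [L, lyapMₗ_apply, transpose_lyapM, hKsymm])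
      hF hF0symm
  refine (crossPositive_lyapMₗ A A N hK).posSemidef_of_hasDerivAt (G' := fun t => L (F t) - FH' t)
    (by simpa [hFH0] using PosSemidef.zero) (fun t ht => (hFsymm t ht).sub (hFHsymm t ht))
    (fun t ht i j => (hF t ht i j).sub (hFHderiv t ht i j)) fun t ht => ?_
  convert hineq t ht using 1
  rw [map_sub]
  abel

/-- Gronwall-type comparison, cf. Lemma 2.3: if `F` solves `F' = 𝓛[F]`
and the symmetric-valued `F_H` satisfies the differential inequality
`F_H' ≤ 𝓛[F_H]` (i.e. `𝓛[F_H(t)] - F_H'(t)` is psd) with `F_H 0 = F 0`, then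
`F(t) - F_H(t)` is positive semidefinite on `[0,T]`. -/
theorem stmt_4 {n q : ℕ} (T : ℝ) (hT : 0 < T)
    (A : Matrix (Fin n) (Fin n) ℝ) (N : Fin q → Matrix (Fin n) (Fin n) ℝ)
    (K : Matrix (Fin q) (Fin q) ℝ) (hK : K.PosSemidef)
    (F FH FH' : ℝ → Matrix (Fin n) (Fin n) ℝ)
    (hF : solvesODE (lyapM A A N N K) F T) (hF0symm : (F 0).IsSymm)
    (hFH0 : FH 0 = F 0)
    (hFHsymm : ∀ t ∈ Set.Icc (0:ℝ) T, (FH t).IsSymm)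
    (hFHderiv : ∀ t ∈ Set.Icc (0:ℝ) T, ∀ i j,
      HasDerivAt (fun s => FH s i j) (FH' t i j) t)
    (hineq : ∀ t ∈ Set.Icc (0:ℝ) T, (lyapM A A N N K (FH t) - FH' t).PosSemidef) :
    ∀ t ∈ Set.Icc (0:ℝ) T, (F t - FH t).PosSemidef :=
  stmt_4_general T A N K hK F FH FH' hF hF0symm hFH0 hFHsymm hFHderiv hineq
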